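/- Let a < b be real numbers, α > 0, β > 0, γ ∈ ℝ, and let c ≥ 0 and d be real numbers with c·a + d > 0 and c(b−a) < c·a + d (so that c x + d > 0 on [a,b] and the hypergeometric series below converges). Then ∫_a^b (x−a)^{α−1} (b−x)^{β−1} (c x + d)^{−γ} dx = (b−a)^{α+β−1} (c·a + d)^{−γ} B(α,β) · ₂F₁(α, γ; α+β; −c(b−a)/(c·a + d)). -/

import Mathlib

/-!
Substituting `x = a + (b - a) t` reduces the integral to Euler's integral
`∫₀¹ t^(α-1) (1-t)^(β-1) (1 - z t)^(-γ) dt` with `z = -c(b-a)/(ca+d) ∈ (-1, 0]`. Expanding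
`(1 - z t)^(-γ) = ∑ (γ)ₙ (z t)ⁿ / n!` and integrating term by term produces the Beta integrals
`B(α + n, β) = B(α, β) (α)ₙ / (α + β)ₙ`, i.e. the hypergeometric series. Term-by-term integration
is legitimate because `B(α + n, β) ≤ B(α, β)` and the binomial series converges absolutely for
`|z| < 1`.
-/

open MeasureTheory Set

/-- Pochhammer symbol `(c)_n = c(c+1)⋯(c+n−1)` for a real `c`. -/
noncomputable def poch (c : ℝ) (n : ℕ) : ℝ := ∏ i ∈ Finset.range n, (c + i)

/-- The Gauss hypergeometric series `₂F₁(a,b;c;z)`. -/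
noncomputable def hyp2F1 (a b c z : ℝ) : ℝ :=
  ∑' n : ℕ, poch a n * poch b n / poch c n * z ^ n / n.factorial

/-- The Beta function `B(x,y) = Γ(x)Γ(y)/Γ(x+y)`. -/
noncomputable def betaFn (x y : ℝ) : ℝ := Real.Gamma x * Real.Gamma y / Real.Gamma (x + y)

open scoped Nat

lemma poch_succ (c : ℝ) (n : ℕ) : poch c (n + 1) = poch c n * (c + n) :=
  Finset.prod_range_succ _ n

lemma poch_eq_ascPochhammer_eval (c : ℝ) (n : ℕ) : poch c n = (ascPochhammer ℝ n).eval c := by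
  induction n with
  | zero => simp [poch]
  | succ n ih => rw [poch_succ, ascPochhammer_succ_eval, ih]

lemma poch_pos {c : ℝ} (hc : 0 < c) (n : ℕ) : 0 < poch c n :=
  Finset.prod_pos fun i _ ↦ by positivity

lemma poch_le_poch {c c' : ℝ} (hc : 0 ≤ c) (h : c ≤ c') (n : ℕ) : poch c n ≤ poch c' n :=
  Finset.prod_le_prod (fun i _ ↦ by positivity) fun i _ ↦ by linarith

lemma Ring.choose_add_sub_one_eq_poch_div_factorial (c : ℝ) (n : ℕ) :
    Ring.choose (c + n - 1) n = poch c n / n ! := by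
  rw [← Ring.multichoose_eq, eq_div_iff (by positivity), mul_comm, ← nsmul_eq_mul,
    Ring.factorial_nsmul_multichoose_eq_ascPochhammer, Polynomial.ascPochhammer_smeval_eq_eval,
    poch_eq_ascPochhammer_eval]

theorem hasSum_poch_mul_pow_div_factorial (γ : ℝ) {y : ℝ} (hy : |y| < 1) :
    HasSum (fun n ↦ poch γ n * y ^ n / n !) ((1 - y) ^ (-γ)) := by
  have hy' : y ∈ Metric.eball (0 : ℝ) 1 := by
    simpa [Metric.mem_eball, edist_dist, Real.dist_eq] using hy
  have h := (Real.one_div_one_sub_rpow_hasFPowerSeriesOnBall_zero γ).hasSum hy'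
  simp only [FormalMultilinearSeries.ofScalars_apply_eq, smul_eq_mul,
    Ring.choose_add_sub_one_eq_poch_div_factorial, zero_add] at h
  rw [Real.rpow_neg (by linarith [le_abs_self y]), ← one_div]
  simpa only [div_mul_eq_mul_div] using h

lemma Real.Gamma_add_nat_eq_poch_mul {x : ℝ} (hx : 0 < x) (n : ℕ) :
    Real.Gamma (x + n) = poch x n * Real.Gamma x := by
  induction n with
  | zero => simp [poch]
  | succ n ih =>
    rw [Nat.cast_succ, ← add_assoc, Real.Gamma_add_one (by positivity), ih, poch_succ]
    ring

lemma betaFn_add_nat {α β : ℝ} (hα : 0 < α) (hβ : 0 < β) (n : ℕ) :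
    betaFn (α + n) β = betaFn α β * (poch α n / poch (α + β) n) := by
  have hαβ : 0 < α + β := by positivity
  have := (poch_pos hαβ n).ne'
  have := (Real.Gamma_pos_of_pos hαβ).ne'
  rw [betaFn, betaFn, add_right_comm, Real.Gamma_add_nat_eq_poch_mul hα,
    Real.Gamma_add_nat_eq_poch_mul hαβ]
  field_simp

lemma betaFn_add_nat_le {α β : ℝ} (hα : 0 < α) (hβ : 0 < β) (n : ℕ) :
    betaFn (α + n) β ≤ betaFn α β := by
  have hB : 0 ≤ betaFn α β := (ProbabilityTheory.beta_pos hα hβ).le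
  rw [betaFn_add_nat hα hβ]
  refine mul_le_of_le_one_right hB ((div_le_one (poch_pos (by positivity) n)).2 ?_)
  exact poch_le_poch hα.le (by linarith) n

lemma ofReal_rpow_mul_one_sub_rpow {p q t : ℝ} (ht : t ∈ Ioo 0 1) :
    ((t ^ (p - 1) * (1 - t) ^ (q - 1) : ℝ) : ℂ) =
      (t : ℂ) ^ ((p : ℂ) - 1) * (1 - (t : ℂ)) ^ ((q : ℂ) - 1) := by
  rw [Complex.ofReal_mul, Complex.ofReal_cpow ht.1.le, Complex.ofReal_cpow (by linarith [ht.2])]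
  push_cast
  rfl

lemma integrableOn_rpow_mul_one_sub_rpow {p q : ℝ} (hp : 0 < p) (hq : 0 < q) :
    IntegrableOn (fun t : ℝ ↦ t ^ (p - 1) * (1 - t) ^ (q - 1)) (Ioo 0 1) := by
  have h := Complex.betaIntegral_convergent (u := p) (v := q) (by simpa) (by simpa)
  rw [intervalIntegrable_iff_integrableOn_Ioc_of_le zero_le_one] at h
  refine IntegrableOn.congr_fun (h.mono_set Ioo_subset_Ioc_self).re (fun t ht ↦ ?_)
    measurableSet_Ioo
  simp [← ofReal_rpow_mul_one_sub_rpow ht]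

lemma integral_rpow_mul_one_sub_rpow {p q : ℝ} (hp : 0 < p) (hq : 0 < q) :
    ∫ t in Ioo (0 : ℝ) 1, t ^ (p - 1) * (1 - t) ^ (q - 1) = betaFn p q := by
  have h := Complex.betaIntegral_convergent (u := p) (v := q) (by simpa) (by simpa)
  rw [intervalIntegrable_iff_integrableOn_Ioc_of_le zero_le_one] at h
  rw [show betaFn p q = ProbabilityTheory.beta p q from rfl,
    ProbabilityTheory.beta_eq_betaIntegralReal p q hp hq, Complex.betaIntegral,
    intervalIntegral.integral_of_le zero_le_one, ← RCLike.re_to_complex, ← integral_re h,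
    integral_Ioc_eq_integral_Ioo]
  refine setIntegral_congr_fun measurableSet_Ioo fun t ht ↦ ?_
  simp [← ofReal_rpow_mul_one_sub_rpow ht]

lemma summable_abs_poch_mul_pow_div_factorial_mul_betaFn {α β γ z : ℝ} (hα : 0 < α)
    (hβ : 0 < β) (hz : |z| < 1) :
    Summable fun n : ℕ ↦ |poch γ n * z ^ n / n !| * betaFn (α + n) β := by
  refine Summable.of_nonneg_of_le (fun n ↦ ?_) (fun n ↦ ?_)
    ((hasSum_poch_mul_pow_div_factorial γ hz).summable.abs.mul_right (betaFn α β))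
  · exact mul_nonneg (abs_nonneg _) (ProbabilityTheory.beta_pos (by positivity) hβ).le
  · exact mul_le_mul_of_nonneg_left (betaFn_add_nat_le hα hβ n) (abs_nonneg _)

lemma hasSum_poch_mul_pow_div_factorial_mul_rpow_mul_one_sub_rpow {α β γ z t : ℝ}
    (hz : |z| < 1) (ht : t ∈ Ioo 0 1) :
    HasSum (fun n : ℕ ↦ poch γ n * z ^ n / n ! * (t ^ (α + n - 1) * (1 - t) ^ (β - 1)))
      (t ^ (α - 1) * (1 - t) ^ (β - 1) * (1 - z * t) ^ (-γ)) := by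
  have hzt : |z * t| < 1 := by
    rw [abs_mul, abs_of_pos ht.1]
    nlinarith [abs_nonneg z, ht.2]
  have hterm (n : ℕ) : poch γ n * z ^ n / n ! * (t ^ (α + n - 1) * (1 - t) ^ (β - 1)) =
      t ^ (α - 1) * (1 - t) ^ (β - 1) * (poch γ n * (z * t) ^ n / n !) := by
    rw [add_sub_right_comm, Real.rpow_add_natCast ht.1.ne']
    ring
  simpa only [hterm] using (hasSum_poch_mul_pow_div_factorial γ hzt).mul_left _

theorem integral_rpow_mul_one_sub_rpow_mul_one_sub_mul_rpow {α β γ z : ℝ} (hα : 0 < α)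
    (hβ : 0 < β) (hz : |z| < 1) :
    ∫ t in Ioo (0 : ℝ) 1, t ^ (α - 1) * (1 - t) ^ (β - 1) * (1 - z * t) ^ (-γ) =
      betaFn α β * hyp2F1 α γ (α + β) z := by
  set F : ℕ → ℝ → ℝ := fun n t ↦ poch γ n * z ^ n / n ! * (t ^ (α + n - 1) * (1 - t) ^ (β - 1))
  have hαn (n : ℕ) : 0 < α + n := by positivity
  have hF_int (n : ℕ) : IntegrableOn (F n) (Ioo 0 1) :=
    (integrableOn_rpow_mul_one_sub_rpow (hαn n) hβ).const_mul _
  have hF_norm (n : ℕ) :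
      ∫ t in Ioo (0 : ℝ) 1, ‖F n t‖ = |poch γ n * z ^ n / n !| * betaFn (α + n) β := by
    rw [← integral_rpow_mul_one_sub_rpow (hαn n) hβ, ← integral_const_mul]
    refine setIntegral_congr_fun measurableSet_Ioo fun t ht ↦ ?_
    have h1t : 0 ≤ 1 - t := by linarith [ht.2]
    rw [Real.norm_eq_abs, abs_mul,
      abs_of_nonneg (mul_nonneg (Real.rpow_nonneg ht.1.le _) (Real.rpow_nonneg h1t _))]
  have hF_summable : Summable fun n ↦ ∫ t in Ioo (0 : ℝ) 1, ‖F n t‖ := by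
    simpa only [hF_norm] using summable_abs_poch_mul_pow_div_factorial_mul_betaFn hα hβ hz
  calc ∫ t in Ioo (0 : ℝ) 1, t ^ (α - 1) * (1 - t) ^ (β - 1) * (1 - z * t) ^ (-γ)
      = ∑' n, ∫ t in Ioo (0 : ℝ) 1, F n t := by
        rw [(hasSum_integral_of_summable_integral_norm hF_int hF_summable).tsum_eq]
        refine setIntegral_congr_fun measurableSet_Ioo fun t ht ↦ ?_
        exact (hasSum_poch_mul_pow_div_factorial_mul_rpow_mul_one_sub_rpow hz ht).tsum_eq.symm
    _ = betaFn α β * hyp2F1 α γ (α + β) z := by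
        rw [hyp2F1, ← tsum_mul_left]
        refine tsum_congr fun n ↦ ?_
        have := (poch_pos (add_pos hα hβ) n).ne'
        rw [integral_const_mul, integral_rpow_mul_one_sub_rpow (hαn n) hβ, betaFn_add_nat hα hβ]
        field_simp

theorem integral_Ioo_eq_mul_integral_Ioo_zero_one (f : ℝ → ℝ) {a b : ℝ} (hab : a ≤ b) :
    ∫ x in Ioo a b, f x = (b - a) * ∫ t in Ioo (0 : ℝ) 1, f (a + (b - a) * t) := by
  rcases hab.eq_or_lt with rfl | hab
  · simp
  have := intervalIntegral.integral_comp_add_mul f (sub_pos.2 hab).ne' a (a := 0) (b := 1)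
  rw [mul_zero, mul_one, add_zero, add_sub_cancel, smul_eq_mul] at this
  rw [← integral_Ioc_eq_integral_Ioo, ← integral_Ioc_eq_integral_Ioo,
    ← intervalIntegral.integral_of_le hab.le, ← intervalIntegral.integral_of_le zero_le_one, this,
    mul_inv_cancel_left₀ (sub_pos.2 hab).ne']

/-- For `a < b`, `α,β > 0`, `γ ∈ ℝ`, `c ≥ 0`, `c·a + d > 0` and `c(b−a) < c·a + d`:
`∫_a^b (x−a)^{α−1}(b−x)^{β−1}(cx+d)^{−γ} dx
  = (b−a)^{α+β−1}(ca+d)^{−γ} B(α,β) ₂F₁(α,γ;α+β;−c(b−a)/(ca+d))`. -/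
theorem integral_beta_linear_rpow (a b α β γ c d : ℝ) (hab : a < b)
    (hα : 0 < α) (hβ : 0 < β) (hc : 0 ≤ c) (hcd : 0 < c * a + d)
    (hconv : c * (b - a) < c * a + d) :
    ∫ x in Ioo a b, (x - a) ^ (α - 1) * (b - x) ^ (β - 1) * (c * x + d) ^ (-γ)
      = (b - a) ^ (α + β - 1) * (c * a + d) ^ (-γ) * betaFn α β *
          hyp2F1 α γ (α + β) (-(c * (b - a)) / (c * a + d)) := by
  have hba : 0 < b - a := sub_pos.2 hab
  set z := -(c * (b - a)) / (c * a + d) with hz_def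
  have hz : |z| < 1 := by
    rw [abs_div, abs_neg, abs_of_nonneg (by positivity), abs_of_pos hcd]
    exact (div_lt_one hcd).2 hconv
  have hintegrand (t : ℝ) (ht : t ∈ Ioo (0 : ℝ) 1) :
      (a + (b - a) * t - a) ^ (α - 1) * (b - (a + (b - a) * t)) ^ (β - 1) *
          (c * (a + (b - a) * t) + d) ^ (-γ) =
        (b - a) ^ (α - 1) * (b - a) ^ (β - 1) * (c * a + d) ^ (-γ) *
          (t ^ (α - 1) * (1 - t) ^ (β - 1) * (1 - z * t) ^ (-γ)) := by
    have hlinear : c * (a + (b - a) * t) + d = (c * a + d) * (1 - z * t) := by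
      rw [hz_def]
      field_simp
      ring
    have hlinear_nonneg : 0 ≤ 1 - z * t := by nlinarith [abs_lt.1 hz, ht.1, ht.2]
    rw [hlinear, show a + (b - a) * t - a = (b - a) * t by ring,
      show b - (a + (b - a) * t) = (b - a) * (1 - t) by ring, Real.mul_rpow hba.le ht.1.le,
      Real.mul_rpow hba.le (by linarith [ht.2]), Real.mul_rpow hcd.le hlinear_nonneg]
    ring
  have hpow : (b - a) * ((b - a) ^ (α - 1) * (b - a) ^ (β - 1)) = (b - a) ^ (α + β - 1) := by
    rw [show α + β - 1 = 1 + (α - 1) + (β - 1) by ring, Real.rpow_add hba, Real.rpow_add hba,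
      Real.rpow_one, mul_assoc]
  rw [integral_Ioo_eq_mul_integral_Ioo_zero_one _ hab.le,
    setIntegral_congr_fun measurableSet_Ioo hintegrand, integral_const_mul,
    integral_rpow_mul_one_sub_rpow_mul_one_sub_mul_rpow hα hβ hz, ← hpow]
  ring
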